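/- arXiv:2510.01301 — 2 statements merged into one kernel-verified Lean document; each statement's English description precedes it below -/
import Mathlib

section
/- Fix p ∈ (0,1) and let A be a Bernoulli(p) random subset of ℕ. For N ∈ ℕ let X_N count the pairs (x,y) with 1 ≤ x, y ≤ N such that x, y, x+y, x·y all lie in A. Then the probability that X_N > 0 tends to 1 as N → ∞: lim_{N→∞} μ(X_N > 0) = 1. -/
open MeasureTheory ProbabilityTheory Filter Function

/-! Taking `x = y`, the pattern is present as soon as `x, 2x, x²` all lie in `A`. Along
`x_k = 3 ^ 3 ^ k` these triples are pairwise disjoint (since `x_k² < x_{k+1}`), so the events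
`{x_k, 2x_k, x_k² ⊆ A}` are independent with common probability `p³ > 0`. By the second
Borel–Cantelli lemma one of them occurs almost surely, and `{X_N > 0}` increases to a set of
full measure. -/

namespace ProbabilityTheory

variable {Ω ι κ β : Type*} [MeasurableSpace Ω] {μ : Measure Ω}

theorem iIndepFun.iIndepSet_preimage [MeasurableSpace β] {f : ι → Ω → β}
    (hf : iIndepFun f μ) (hf_meas : ∀ i, Measurable (f i)) {B : ι → Set β}
    (hB : ∀ i, MeasurableSet (B i)) : iIndepSet (fun i => f i ⁻¹' B i) μ :=
  (iIndepSet_iff_meas_biInter fun i => hf_meas i (hB i)).2 fun _ =>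
    hf.meas_biInter fun i _ => ⟨B i, hB i, rfl⟩

theorem iIndepSet.biInter_of_pairwise_disjoint {s : ι → Set Ω} (hs : iIndepSet s μ)
    (hs_meas : ∀ i, MeasurableSet (s i)) {S : κ → Finset ι} (hS : Pairwise (Disjoint on S)) :
    iIndepSet (fun k => ⋂ i ∈ S k, s i) μ := by
  classical
  refine (iIndepSet_iff_meas_biInter fun k =>
    .biInter (S k).countable_toSet fun i _ => hs_meas i).2 fun J => ?_
  have hJ : Set.PairwiseDisjoint (J : Set κ) S := fun k _ l _ hkl => hS hkl
  calc μ (⋂ k ∈ J, ⋂ i ∈ S k, s i) = μ (⋂ i ∈ J.biUnion S, s i) := by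
        simp only [Finset.set_biInter_biUnion]
    _ = ∏ k ∈ J, ∏ i ∈ S k, μ (s i) := by rw [hs.meas_biInter, Finset.prod_biUnion hJ]
    _ = ∏ k ∈ J, μ (⋂ i ∈ S k, s i) := by simp only [hs.meas_biInter]

end ProbabilityTheory

def diagonalPattern (x : ℕ) : Finset ℕ := {x, x + x, x * x}

theorem card_diagonalPattern {x : ℕ} (hx : 3 ≤ x) : (diagonalPattern x).card = 3 :=
  Finset.card_eq_three.2 ⟨x, x + x, x * x, by omega, by nlinarith, by nlinarith, rfl⟩

theorem diagonalPattern_subset_Icc {x : ℕ} (hx : 2 ≤ x) :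
    diagonalPattern x ⊆ Finset.Icc x (x * x) := by
  intro i hi
  simp only [diagonalPattern, Finset.mem_insert, Finset.mem_singleton] at hi
  rw [Finset.mem_Icc]
  rcases hi with rfl | rfl | rfl <;> constructor <;> nlinarith

theorem sq_pow_three_pow_lt (k : ℕ) : 3 ^ 3 ^ k * 3 ^ 3 ^ k < 3 ^ 3 ^ (k + 1) := by
  rw [← pow_add, pow_succ]
  exact Nat.pow_lt_pow_right (by norm_num) (by have := Nat.one_le_pow k 3 (by norm_num); omega)

theorem pairwise_disjoint_diagonalPattern_pow :
    Pairwise (Disjoint on fun k => diagonalPattern (3 ^ 3 ^ k)) := by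
  refine (pairwise_disjoint_on _).2 fun k l hkl => Finset.disjoint_left.2 fun i hik hil => ?_
  have h2 : ∀ n, 2 ≤ 3 ^ 3 ^ n := fun n =>
    le_trans (by norm_num) (Nat.one_lt_pow (by positivity) (by norm_num : 1 < 3))
  have hik := Finset.mem_Icc.1 (diagonalPattern_subset_Icc (h2 k) hik)
  have hil := Finset.mem_Icc.1 (diagonalPattern_subset_Icc (h2 l) hil)
  have hpow_le : 3 ^ 3 ^ (k + 1) ≤ 3 ^ 3 ^ l :=
    Nat.pow_le_pow_right (by norm_num) (Nat.pow_le_pow_right (by norm_num) hkl)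
  have := sq_pow_three_pow_lt k
  omega

def patternPairs (a : ℕ → Bool) (N : ℕ) : Finset (ℕ × ℕ) :=
  (Finset.Icc 1 N ×ˢ Finset.Icc 1 N).filter
    (fun q => a q.1 = true ∧ a q.2 = true ∧ a (q.1 + q.2) = true ∧ a (q.1 * q.2) = true)

theorem patternPairs_mono (a : ℕ → Bool) : Monotone (patternPairs a) := fun _ _ h =>
  Finset.filter_subset_filter _ <| Finset.product_subset_product
    (Finset.Icc_subset_Icc_right h) (Finset.Icc_subset_Icc_right h)

theorem mem_patternPairs_diag {a : ℕ → Bool} {x : ℕ} (hx : 1 ≤ x)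
    (ha : ∀ i ∈ diagonalPattern x, a i = true) : (x, x) ∈ patternPairs a x := by
  simp only [diagonalPattern, Finset.mem_insert, Finset.mem_singleton, forall_eq_or_imp,
    forall_eq] at ha
  simp only [patternPairs, Finset.mem_filter, Finset.mem_product, Finset.mem_Icc]
  exact ⟨⟨⟨hx, le_rfl⟩, hx, le_rfl⟩, ha.1, ha.1, ha.2⟩

/-- For a Bernoulli(`p`) random subset of `ℕ`, the probability that some pair `(x, y)`
with `1 ≤ x, y ≤ N` satisfies `x, y, x+y, x·y ∈ A` tends to `1` as `N → ∞`. -/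
theorem hindman_pattern_whp {Ω : Type*} [MeasurableSpace Ω]
    (μ : Measure Ω) [IsProbabilityMeasure μ]
    (p : ℝ) (hp : p ∈ Set.Ioo (0 : ℝ) 1)
    (ε : ℕ → Ω → Bool) (hmeas : ∀ n, Measurable (ε n))
    (hindep : iIndepFun ε μ)
    (hbern : ∀ n, μ {ω | ε n ω = true} = ENNReal.ofReal p)
    (X : ℕ → Ω → ℕ)
    (hX : ∀ N ω, X N ω = ((Finset.Icc 1 N ×ˢ Finset.Icc 1 N).filter
      (fun q => ε q.1 ω = true ∧ ε q.2 ω = true ∧ ε (q.1 + q.2) ω = true ∧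
        ε (q.1 * q.2) ω = true)).card) :
    Tendsto (fun N => μ {ω | 0 < X N ω}) atTop (nhds 1) := by
  set U : ℕ → Set Ω := fun N => {ω | (patternPairs (ε · ω) N).Nonempty}
  have hXU : ∀ N, {ω | 0 < X N ω} = U N := fun N => by
    ext ω
    simp only [hX, Finset.card_pos]
    rfl
  have hA_meas : ∀ n, MeasurableSet {ω | ε n ω = true} :=
    fun n => hmeas n (measurableSet_singleton true)
  have hA_indep : iIndepSet (fun n => {ω | ε n ω = true}) μ :=
    hindep.iIndepSet_preimage hmeas fun _ => measurableSet_singleton true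
  set E : ℕ → Set Ω := fun k => ⋂ i ∈ diagonalPattern (3 ^ 3 ^ k), {ω | ε i ω = true}
  have hE_prob : ∀ k, μ (E k) = ENNReal.ofReal p ^ 3 := fun k => by
    rw [hA_indep.meas_biInter, Finset.prod_congr rfl fun i _ => hbern i, Finset.prod_const,
      card_diagonalPattern (le_trans (by norm_num) (Nat.le_self_pow (by positivity) 3))]
  have hE_U : ∀ k, E k ⊆ U (3 ^ 3 ^ k) := fun k ω hω =>
    ⟨_, mem_patternPairs_diag (Nat.one_le_pow _ _ (by norm_num)) (by simpa [E] using hω)⟩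
  have hU_univ : μ (⋃ N, U N) = 1 := by
    have hlimsup : μ (limsup E atTop) = 1 := by
      refine measure_limsup_eq_one
        (fun k => .biInter (Finset.countable_toSet _) fun i _ => hA_meas i)
        (hA_indep.biInter_of_pairwise_disjoint hA_meas pairwise_disjoint_diagonalPattern_pow) ?_
      simp only [hE_prob]
      exact ENNReal.tsum_const_eq_top_of_ne_zero (pow_ne_zero _ (ENNReal.ofReal_pos.2 hp.1).ne')
    refine le_antisymm prob_le_one (hlimsup ▸ measure_mono ?_)
    exact limsup_le_iSup.trans (Set.iUnion_mono' fun k => ⟨_, hE_U k⟩)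
  simp only [hXU, ← hU_univ]
  exact tendsto_measure_iUnion_atTop fun _ _ h _ hω => hω.mono (patternPairs_mono _ h)
end

section
/- Fix p ∈ (0,1) and let A be a Bernoulli(p) random subset of ℕ. Then with probability 1 the following holds: for every M > 0 and every integer L ≥ 1, there exist natural numbers x_1 < ⋯ < x_L such that FP(x_1,…,x_L) ⊆ A and every element of FP(x_1,…,x_L) is greater than M. -/
open MeasureTheory ProbabilityTheory

/-- The finite product set of `x : Fin L → ℕ`: all products over nonempty subsets of indices. -/
def FP {L : ℕ} (x : Fin L → ℕ) : Set ℕ :=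
  {s | ∃ F : Finset (Fin L), F.Nonempty ∧ s = ∏ i ∈ F, x i}

/-!
For each `N`, the blocks `{q ^ m | 1 ≤ m < N}`, `q` running over the primes, are pairwise
disjoint, so the events "the block lies in `A`" are independent, each of probability at least
`p ^ N`. By the second Borel–Cantelli lemma, almost surely infinitely many of them occur. For
`N = 2 ^ L` and such a block with `q > M`, take `x i = q ^ 2 ^ i`: the product over a nonempty
`F` is `q ^ m` with `m = ∑ i ∈ F, 2 ^ i ∈ [1, 2 ^ L)`, an element of the block.
-/

open Filter Finset Function
open scoped ENNReal

namespace ProbabilityTheory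

variable {Ω ι : Type*} {ε : ι → Ω → Bool}

lemma setOf_forall_mem_eq_biInter (S : Finset ι) :
    {ω | ∀ i ∈ S, ε i ω = true} = ⋂ i ∈ S, ε i ⁻¹' {true} := by
  ext; simp

variable [MeasurableSpace Ω] {μ : Measure Ω} {q : ℝ≥0∞}

lemma measurableSet_forall_mem_eq_true (hmeas : ∀ i, Measurable (ε i)) (S : Finset ι) :
    MeasurableSet {ω | ∀ i ∈ S, ε i ω = true} := by
  rw [setOf_forall_mem_eq_biInter]
  exact S.measurableSet_biInter fun i _ => hmeas i (measurableSet_singleton true)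

lemma iIndepFun.measure_forall_mem_eq_true (hindep : iIndepFun ε μ)
    (hq : ∀ i, μ {ω | ε i ω = true} = q) (S : Finset ι) :
    μ {ω | ∀ i ∈ S, ε i ω = true} = q ^ #S := by
  rw [setOf_forall_mem_eq_biInter, iIndepFun_iff_measure_inter_preimage_eq_mul.1 hindep S
    fun _ _ => measurableSet_singleton true]
  exact prod_eq_pow_card fun i _ => hq i

lemma iIndepFun.iIndepSet_forall_mem_eq_true {κ : Type*} [DecidableEq ι]
    (hmeas : ∀ i, Measurable (ε i)) (hindep : iIndepFun ε μ)
    (hq : ∀ i, μ {ω | ε i ω = true} = q) {B : κ → Finset ι}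
    (hB : Pairwise (Disjoint on B)) :
    iIndepSet (fun k => {ω | ∀ i ∈ B k, ε i ω = true}) μ := by
  rw [iIndepSet_iff_meas_biInter fun k => measurableSet_forall_mem_eq_true hmeas (B k)]
  intro t
  have hinter : ⋂ k ∈ t, {ω | ∀ i ∈ B k, ε i ω = true} =
      {ω | ∀ i ∈ t.biUnion B, ε i ω = true} := by
    ext; simp only [Set.mem_iInter, Set.mem_ofPred_eq, mem_biUnion]; grind
  rw [hinter, hindep.measure_forall_mem_eq_true hq, card_biUnion fun k _ l _ hkl => hB hkl,
    ← prod_pow_eq_pow_sum]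
  exact prod_congr rfl fun k _ => (hindep.measure_forall_mem_eq_true hq (B k)).symm

theorem iIndepFun.ae_frequently_forall_mem_eq_true [IsProbabilityMeasure μ]
    (hmeas : ∀ i, Measurable (ε i)) (hindep : iIndepFun ε μ)
    (hq : ∀ i, μ {ω | ε i ω = true} = q) (hq0 : q ≠ 0) {B : ℕ → Finset ι}
    (hB : Pairwise (Disjoint on B)) {N : ℕ} (hcard : ∀ k, #(B k) ≤ N) :
    ∀ᵐ ω ∂μ, ∃ᶠ k in atTop, ∀ i ∈ B k, ε i ω = true := by
  rcases isEmpty_or_nonempty ι with hι | hι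
  · exact .of_forall fun _ => .of_forall fun _ i => isEmptyElim i
  classical
  set E : ℕ → Set Ω := fun k => {ω | ∀ i ∈ B k, ε i ω = true}
  have hEmeas : ∀ k, MeasurableSet (E k) := fun k => measurableSet_forall_mem_eq_true hmeas (B k)
  have hq1 : q ≤ 1 := hq (Classical.arbitrary ι) ▸ prob_le_one
  have hsum : ∑' k, μ (E k) = ∞ := by
    refine top_unique ((ENNReal.tsum_const_eq_top_of_ne_zero (pow_ne_zero N hq0)).symm.le.trans
      (ENNReal.tsum_le_tsum fun k => ?_))
    rw [hindep.measure_forall_mem_eq_true hq]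
    exact pow_le_pow_of_le_one zero_le hq1 (hcard k)
  have hlimsup : μ (limsup E atTop) = 1 :=
    measure_limsup_eq_one hEmeas (hindep.iIndepSet_forall_mem_eq_true hmeas hq hB) hsum
  have hae : limsup E atTop ∈ ae μ :=
    (mem_ae_iff_prob_eq_one (MeasurableSet.measurableSet_limsup hEmeas)).2 hlimsup
  filter_upwards [hae] with ω hω
  exact mem_limsup_iff_frequently_mem.1 hω

end ProbabilityTheory

def powBlock (b N : ℕ) : Finset ℕ := (Ico 1 N).image (b ^ ·)

lemma card_powBlock_le (b N : ℕ) : #(powBlock b N) ≤ N :=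
  card_image_le.trans (by simp)

lemma le_of_mem_powBlock {b N n : ℕ} (hn : n ∈ powBlock b N) : b ≤ n := by
  obtain ⟨m, hm, rfl⟩ := mem_image.1 hn
  exact Nat.le_self_pow (by grind) b

lemma Nat.Prime.disjoint_powBlock {p q : ℕ} (hp : p.Prime) (hq : q.Prime) (hpq : p ≠ q)
    (N : ℕ) :
    Disjoint (powBlock p N) (powBlock q N) := by
  simp only [powBlock, disjoint_left, mem_image, mem_Ico, not_exists, not_and]
  rintro _ ⟨m, hm, rfl⟩ m' hm' hpow
  have hdvd : p ∣ q ^ m' := hpow ▸ dvd_pow_self p (by omega)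
  exact hpq ((Nat.prime_dvd_prime_iff_eq hp hq).1 (hp.dvd_of_dvd_pow hdvd))

lemma pairwise_disjoint_powBlock_nth_prime (N : ℕ) :
    Pairwise (Disjoint on fun k => powBlock (Nat.nth Nat.Prime k) N) := fun k l hkl =>
  (Nat.prime_nth_prime k).disjoint_powBlock (Nat.prime_nth_prime l)
    ((Nat.nth_injective Nat.infinite_setOfPred_prime).ne hkl) N

lemma FP_pow_two_pow_subset_powBlock (b L : ℕ) :
    FP (fun i : Fin L => b ^ 2 ^ (i : ℕ)) ⊆ powBlock b (2 ^ L) := by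
  rintro _ ⟨F, ⟨i, hi⟩, rfl⟩
  rw [prod_pow_eq_pow_sum]
  refine mem_image.2 ⟨_, mem_Ico.2 ⟨?_, ?_⟩, rfl⟩
  · exact Nat.one_le_two_pow.trans
      (single_le_sum (f := fun j : Fin L => 2 ^ (j : ℕ)) (fun _ _ => zero_le) hi)
  · simpa using Nat.geomSum_lt (s := F.map Fin.valEmbedding) le_rfl (by simp)

/-- For a Bernoulli(`p`) random subset `A(ω) = {n | ε n ω = true}` of `ℕ`, almost surely,
for every bound `M` and every `L ≥ 1` there are `x₁ < ⋯ < x_L` with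
`FP(x₁,…,x_L) ⊆ A(ω)` and all elements of `FP(x₁,…,x_L)` greater than `M`. -/
theorem FP_with_large_elements {Ω : Type*} [MeasurableSpace Ω]
    (μ : Measure Ω) [IsProbabilityMeasure μ]
    (p : ℝ) (hp : p ∈ Set.Ioo (0 : ℝ) 1)
    (ε : ℕ → Ω → Bool) (hmeas : ∀ n, Measurable (ε n))
    (hindep : iIndepFun ε μ)
    (hbern : ∀ n, μ {ω | ε n ω = true} = ENNReal.ofReal p) :
    ∀ᵐ ω ∂μ, ∀ M : ℕ, 0 < M → ∀ L : ℕ, 1 ≤ L →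
      ∃ x : Fin L → ℕ, StrictMono x ∧ FP x ⊆ {n | ε n ω = true} ∧
        ∀ s ∈ FP x, M < s := by
  have hblocks : ∀ᵐ ω ∂μ, ∀ N, ∃ᶠ k in atTop,
      ∀ n ∈ powBlock (Nat.nth Nat.Prime k) N, ε n ω = true :=
    ae_all_iff.2 fun N => hindep.ae_frequently_forall_mem_eq_true hmeas hbern
      (ENNReal.ofReal_pos.2 hp.1).ne' (pairwise_disjoint_powBlock_nth_prime N)
      fun _ => card_powBlock_le _ N
  filter_upwards [hblocks] with ω hω M _ L _
  obtain ⟨k, hk, hMk⟩ := ((hω (2 ^ L)).and_eventually (eventually_ge_atTop M)).exists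
  set b := Nat.nth Nat.Prime k
  have hMb : M < b := by have := Nat.add_two_le_nth_prime k; omega
  have hFP := FP_pow_two_pow_subset_powBlock b L
  refine ⟨fun i => b ^ 2 ^ (i : ℕ), fun i j hij => ?_, fun s hs => hk s (hFP hs),
    fun s hs => hMb.trans_le (le_of_mem_powBlock (hFP hs))⟩
  exact Nat.pow_lt_pow_right (by omega) (Nat.pow_lt_pow_right one_lt_two hij)
end
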